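/- arXiv:2311.05254 — 3 statements merged into one kernel-verified Lean document; each statement's English description precedes it below -/
import Mathlib

section
/- If T₁(r) and T₂(r) are any two characteristic functions of the equation (*) (i.e., defined from any two solution bases of (*)), where all the coefficients A₀,…,A_{n−1} are entire, then T₁(r) = T₂(r) + O(1) as r → ∞. -/
open MeasureTheory Filter Metric

noncomputable section

/-- `log⁺ x = max (log x) 0`. -/
def logPlus (x : ℝ) : ℝ := max (Real.log x) 0

/-- The point `r·e^{iθ}` on the circle of radius `r`. -/
def circlePt (r θ : ℝ) : ℂ := (r : ℂ) * Complex.exp (θ * Complex.I)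

/-- Maximum modulus `M(r,g)`. -/
def maxMod (g : ℂ → ℂ) (r : ℝ) : ℝ := sSup ((fun z => ‖g z‖) '' sphere (0:ℂ) r)

/-- `L(r,a,f) = max_{|z|=r} log⁺ (1/|f z − a|)`. -/
def Lfin (f : ℂ → ℂ) (a : ℂ) (r : ℝ) : ℝ :=
  sSup ((fun z => logPlus (1 / ‖f z - a‖)) '' sphere (0:ℂ) r)

/-- `L(r,∞,f) = max_{|z|=r} log⁺ |f z|`. -/
def Linf (f : ℂ → ℂ) (r : ℝ) : ℝ :=
  sSup ((fun z => logPlus ‖f z‖) '' sphere (0:ℂ) r)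

/-- Nevanlinna proximity function `m(r,a,f)`. -/
def proximity (f : ℂ → ℂ) (a : ℂ) (r : ℝ) : ℝ :=
  (1 / (2 * Real.pi)) * ∫ θ in (0:ℝ)..(2 * Real.pi), logPlus (1 / ‖f (circlePt r θ) - a‖)

/-- Spherical derivative `f#`. -/
def sphDeriv (f : ℂ → ℂ) (z : ℂ) : ℝ := ‖deriv f z‖ / (1 + ‖f z‖ ^ 2)

/-- `A(r,f)`, the normalized spherical area of the image of `D(0,r)`. -/
def sphArea (f : ℂ → ℂ) (r : ℝ) : ℝ :=
  (1 / Real.pi) * ∫ z in ball (0:ℂ) r, sphDeriv f z ^ 2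

/-- Ahlfors–Shimizu characteristic `T₀(r,f)`. -/
def T0 (f : ℂ → ℂ) (r : ℝ) : ℝ := ∫ t in (0:ℝ)..r, sphArea f t / t

/-- The Nevanlinna characteristic `T(r,f)`; we use the Ahlfors–Shimizu characteristic,
which agrees with the classical Nevanlinna characteristic up to a bounded term. -/
def nevT (f : ℂ → ℂ) (r : ℝ) : ℝ := T0 f r

/-- Petrenko's magnitude of deviation `δ_P(a,f)`. -/
def deltaP (f : ℂ → ℂ) (a : ℂ) : ℝ := liminf (fun r => Lfin f a r / nevT f r) atTop

/-- Nevanlinna deficiency `δ_N(a,f)`. -/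
def deltaN (f : ℂ → ℂ) (a : ℂ) : ℝ := liminf (fun r => proximity f a r / nevT f r) atTop

/-- Eremenko deviation `δ_E(a,f)`. -/
def deltaE (f : ℂ → ℂ) (a : ℂ) : ℝ := liminf (fun r => Lfin f a r / sphArea f r) atTop

/-- Order of growth `ρ(f)` (as an extended real, via the characteristic). -/
def fnOrder (f : ℂ → ℂ) : EReal :=
  limsup (fun r => ((Real.log (nevT f r) / Real.log r : ℝ) : EReal)) atTop

/-- Logarithmic order `ρ_log(f)`. -/
def fnLogOrder (f : ℂ → ℂ) : EReal :=
  limsup (fun r => ((Real.log (nevT f r) / Real.log (Real.log r) : ℝ) : EReal)) atTop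

/-- Upper linear density of `E ⊆ [0,∞)`. -/
def upDens (E : Set ℝ) : ℝ :=
  limsup (fun r => (volume (E ∩ Set.Icc 0 r)).toReal / r) atTop

/-- Upper logarithmic density of `E ⊆ [1,∞)`. -/
def upLogDens (E : Set ℝ) : ℝ :=
  limsup (fun r => (∫ t in E ∩ Set.Icc 1 r, 1 / t) / Real.log r) atTop

/-- Finite linear (Lebesgue) measure. -/
def FiniteLinearMeasure (E : Set ℝ) : Prop := volume E < ⊤

/-- Finite logarithmic measure: `∫_E dt/t < ∞`. -/
def FiniteLogMeasure (E : Set ℝ) : Prop := ∫⁻ t in E, ENNReal.ofReal (1 / t) < ⊤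

/-- `g` is (the function of) a polynomial. -/
def IsPolyFn (g : ℂ → ℂ) : Prop := ∃ p : Polynomial ℂ, ∀ z, g z = p.eval z

/-- `g` is a rational function. -/
def IsRatFn (g : ℂ → ℂ) : Prop :=
  ∃ p q : Polynomial ℂ, q ≠ 0 ∧ ∀ z, q.eval z ≠ 0 → g z = p.eval z / q.eval z

/-- Transcendental entire function. -/
def TranscEntire (g : ℂ → ℂ) : Prop := Differentiable ℂ g ∧ ¬ IsPolyFn g

/-- Transcendental meromorphic function on ℂ. -/
def TranscMero (g : ℂ → ℂ) : Prop := MeromorphicOn g Set.univ ∧ ¬ IsRatFn g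

/-- Entire solution of `f⁽ⁿ⁾ + A_{n-1} f⁽ⁿ⁻¹⁾ + ⋯ + A₀ f = 0`. -/
def IsSolutionE (n : ℕ) (A : Fin n → ℂ → ℂ) (f : ℂ → ℂ) : Prop :=
  Differentiable ℂ f ∧
  ∀ z, iteratedDeriv n f z + ∑ j : Fin n, A j z * iteratedDeriv j f z = 0

/-- Meromorphic solution of the equation (the identity is required at every point where
all functions involved are analytic, which determines it as an identity of meromorphic
functions). -/
def IsSolutionM (n : ℕ) (A : Fin n → ℂ → ℂ) (f : ℂ → ℂ) : Prop :=
  MeromorphicOn f Set.univ ∧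
  ∀ z, AnalyticAt ℂ f z → (∀ j, AnalyticAt ℂ (A j) z) →
    iteratedDeriv n f z + ∑ j : Fin n, A j z * iteratedDeriv j f z = 0

/-- A solution base of the equation with entire coefficients. -/
def IsSolutionBase (n : ℕ) (A : Fin n → ℂ → ℂ) (F : Fin n → ℂ → ℂ) : Prop :=
  (∀ k, IsSolutionE n A (F k)) ∧ LinearIndependent ℂ F ∧
  ∀ g, IsSolutionE n A g → ∃ c : Fin n → ℂ, g = fun z => ∑ k : Fin n, c k * F k z

/-- The characteristic function `T(r)` of the equation attached to a solution base. -/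
def charFn (n : ℕ) (F : Fin n → ℂ → ℂ) (r : ℝ) : ℝ :=
  (1 / (2 * Real.pi)) * ∫ θ in (0:ℝ)..(2 * Real.pi),
    Real.log (Real.sqrt (1 + ∑ k : Fin n, ‖F k (circlePt r θ)‖ ^ 2))

/-- Multiplicity of `z` as a zero of `g` (smallest `k` with `g⁽ᵏ⁾(z) ≠ 0`). -/
def zeroMult (g : ℂ → ℂ) (z : ℂ) : ℕ := sInf {k : ℕ | iteratedDeriv k g z ≠ 0}

/-- Number of zeros of `g` in `|z| ≤ r`, counted with multiplicity. -/
def zeroCount (g : ℂ → ℂ) (r : ℝ) : ℕ := ∑ᶠ z ∈ closedBall (0:ℂ) r, zeroMult g z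

end

/-!
Each solution base is a constant linear combination of the other, so by Cauchy–Schwarz the
quantities `1 + ∑ |f_k(z)|²` of the two bases are comparable up to constant factors at every
point. Their logarithms thus differ by a bounded amount, and so do their means over circles.
-/

lemma sum_norm_sum_mul_sq_le {ι κ R : Type*} [Fintype ι] [Fintype κ] [NonUnitalSeminormedRing R]
    (c : κ → ι → R) (v : ι → R) :
    ∑ k, ‖∑ j, c k j * v j‖ ^ 2 ≤ (∑ k, ∑ j, ‖c k j‖ ^ 2) * ∑ j, ‖v j‖ ^ 2 := by
  rw [Finset.sum_mul]
  refine Finset.sum_le_sum fun k _ => ?_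
  calc ‖∑ j, c k j * v j‖ ^ 2 ≤ (∑ j, ‖c k j‖ * ‖v j‖) ^ 2 := by
        gcongr
        exact (norm_sum_le _ _).trans (Finset.sum_le_sum fun j _ => norm_mul_le _ _)
    _ ≤ (∑ j, ‖c k j‖ ^ 2) * ∑ j, ‖v j‖ ^ 2 := Finset.sum_mul_sq_le_sq_mul_sq _ _ _

lemma one_add_sum_norm_sum_mul_sq_le {ι κ R : Type*} [Fintype ι] [Fintype κ]
    [NonUnitalSeminormedRing R] (c : κ → ι → R) (v : ι → R) :
    1 + ∑ k, ‖∑ j, c k j * v j‖ ^ 2 ≤ (1 + ∑ k, ∑ j, ‖c k j‖ ^ 2) * (1 + ∑ j, ‖v j‖ ^ 2) := by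
  have hc : 0 ≤ ∑ k, ∑ j, ‖c k j‖ ^ 2 := by positivity
  have hv : 0 ≤ ∑ j, ‖v j‖ ^ 2 := by positivity
  nlinarith [sum_norm_sum_mul_sq_le c v]

lemma abs_log_sqrt_sub_log_sqrt_le {a b K₁ K₂ : ℝ} (ha : 0 < a) (hb : 0 < b)
    (hab : a ≤ K₁ * b) (hba : b ≤ K₂ * a) :
    |Real.log √a - Real.log √b| ≤ max (Real.log K₁) (Real.log K₂) / 2 := by
  have hK₁ : 0 < K₁ := pos_of_mul_pos_left (ha.trans_le hab) hb.le
  have hK₂ : 0 < K₂ := pos_of_mul_pos_left (hb.trans_le hba) ha.le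
  have h₁ : Real.log a ≤ Real.log K₁ + Real.log b := by
    rw [← Real.log_mul hK₁.ne' hb.ne']
    exact Real.log_le_log ha hab
  have h₂ : Real.log b ≤ Real.log K₂ + Real.log a := by
    rw [← Real.log_mul hK₂.ne' ha.ne']
    exact Real.log_le_log hb hba
  rw [Real.log_sqrt ha.le, Real.log_sqrt hb.le, abs_le]
  constructor <;> linarith [le_max_left (Real.log K₁) (Real.log K₂),
    le_max_right (Real.log K₁) (Real.log K₂)]

lemma IsSolutionBase.exists_one_add_sum_norm_sq_le {n : ℕ} {A F G : Fin n → ℂ → ℂ}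
    (hF : IsSolutionBase n A F) (hG : ∀ k, IsSolutionE n A (G k)) :
    ∃ K : ℝ, ∀ z, 1 + ∑ k, ‖G k z‖ ^ 2 ≤ K * (1 + ∑ k, ‖F k z‖ ^ 2) := by
  choose c hc using fun k => hF.2.2 (G k) (hG k)
  refine ⟨1 + ∑ k, ∑ j, ‖c k j‖ ^ 2, fun z => ?_⟩
  simpa only [hc] using one_add_sum_norm_sum_mul_sq_le c (F · z)

@[fun_prop]
lemma continuous_circlePt (r : ℝ) : Continuous (circlePt r) := by
  unfold circlePt
  fun_prop

lemma continuous_log_sqrt_one_add_sum_norm_sq {n : ℕ} {F : Fin n → ℂ → ℂ}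
    (hF : ∀ k, Continuous (F k)) (r : ℝ) :
    Continuous fun θ => Real.log √(1 + ∑ k, ‖F k (circlePt r θ)‖ ^ 2) := by
  refine Continuous.log (by fun_prop) fun θ => ?_
  have : 0 ≤ ∑ k, ‖F k (circlePt r θ)‖ ^ 2 := by positivity
  exact (Real.sqrt_pos.2 (by linarith)).ne'

lemma abs_charFn_sub_le {n : ℕ} {F₁ F₂ : Fin n → ℂ → ℂ} {B : ℝ}
    (hF₁ : ∀ k, Continuous (F₁ k)) (hF₂ : ∀ k, Continuous (F₂ k))
    (hB : ∀ z, |Real.log √(1 + ∑ k, ‖F₁ k z‖ ^ 2) - Real.log √(1 + ∑ k, ‖F₂ k z‖ ^ 2)| ≤ B)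
    (r : ℝ) : |charFn n F₁ r - charFn n F₂ r| ≤ B := by
  have hπ : 0 < 2 * Real.pi := by positivity
  have hint : ‖∫ θ in (0:ℝ)..(2 * Real.pi), (Real.log √(1 + ∑ k, ‖F₁ k (circlePt r θ)‖ ^ 2) -
      Real.log √(1 + ∑ k, ‖F₂ k (circlePt r θ)‖ ^ 2))‖ ≤ B * |2 * Real.pi - 0| :=
    intervalIntegral.norm_integral_le_of_norm_le_const fun θ _ => hB _
  rw [charFn, charFn, ← mul_sub, ← intervalIntegral.integral_sub
    ((continuous_log_sqrt_one_add_sum_norm_sq hF₁ r).intervalIntegrable _ _)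
    ((continuous_log_sqrt_one_add_sum_norm_sq hF₂ r).intervalIntegrable _ _),
    abs_mul, abs_of_pos (by positivity)]
  rw [Real.norm_eq_abs, sub_zero, abs_of_pos hπ] at hint
  calc 1 / (2 * Real.pi) * |_| ≤ 1 / (2 * Real.pi) * (B * (2 * Real.pi)) := by gcongr
    _ = B := by field_simp

theorem two_characteristic_functions_differ_by_O1_general
    {n : ℕ} (A : Fin n → ℂ → ℂ)
    (F₁ F₂ : Fin n → ℂ → ℂ)
    (h₁ : IsSolutionBase n A F₁) (h₂ : IsSolutionBase n A F₂) :
    ∃ C : ℝ, ∀ᶠ r in Filter.atTop, |charFn n F₁ r - charFn n F₂ r| ≤ C := by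
  obtain ⟨K₁, hK₁⟩ := h₂.exists_one_add_sum_norm_sq_le h₁.1
  obtain ⟨K₂, hK₂⟩ := h₁.exists_one_add_sum_norm_sq_le h₂.1
  have hpos : ∀ (F : Fin n → ℂ → ℂ) z, 0 < 1 + ∑ k, ‖F k z‖ ^ 2 := fun F z => by positivity
  refine ⟨max (Real.log K₁) (Real.log K₂) / 2, Eventually.of_forall fun r => ?_⟩
  exact abs_charFn_sub_le (fun k => (h₁.1 k).1.continuous) (fun k => (h₂.1 k).1.continuous)
    (fun z => abs_log_sqrt_sub_log_sqrt_le (hpos F₁ z) (hpos F₂ z) (hK₁ z) (hK₂ z)) r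

/-- Any two characteristic functions of the equation (defined from any two
solution bases) agree up to `O(1)` as `r → ∞`. -/
theorem two_characteristic_functions_differ_by_O1
    {n : ℕ} (A : Fin n → ℂ → ℂ) (hA : ∀ j, Differentiable ℂ (A j))
    (F₁ F₂ : Fin n → ℂ → ℂ)
    (h₁ : IsSolutionBase n A F₁) (h₂ : IsSolutionBase n A F₂) :
    ∃ C : ℝ, ∀ᶠ r in Filter.atTop, |charFn n F₁ r - charFn n F₂ r| ≤ C :=
  two_characteristic_functions_differ_by_O1_general A F₁ F₂ h₁ h₂
end

section
/- If f is a transcendental meromorphic function on ℂ with ρ_log(f) > α > 2, then the set H₂ = {r ≥ 1 : A(r,f) ≥ log^{α−1} r} satisfies logdens̄(H₂) = 1. -/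
open MeasureTheory Filter Metric

/-! Write `T(r) = ∫₀ʳ A(t)/t dt` for the Ahlfors–Shimizu characteristic. As `A` is
nondecreasing on some `[a, ∞)`, `T(r) ≤ T(a) + A(r) log r` for `r ≥ a`. If `ρ_log(f) > β > α`,
then `T(r) > log^β r` for arbitrarily large `r`, and at such `r` this forces
`A(r) ≥ (K log r)^{α-1} ≥ log^{α-1} t` for every `t ∈ [r, r^K]`: the whole interval `[r, r^K]`
lies in `H₂`. It carries the fraction `1 - 1/K` of the logarithmic measure of `[1, r^K]`, so
the upper logarithmic density of `H₂` is at least `1 - 1/K` for every `K > 1`. -/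

open Set Real Topology

section LogDensity

theorem integral_Icc_one_div {r R : ℝ} (hr : 0 < r) (hrR : r ≤ R) :
    ∫ t in Icc r R, 1 / t = log R - log r := by
  rw [integral_Icc_eq_integral_Ioc, ← intervalIntegral.integral_of_le hrR,
    integral_one_div (by rw [uIcc_of_le hrR]; exact fun h => hr.not_ge h.1),
    log_div (by linarith) hr.ne']

theorem setIntegral_one_div_mono {s t : Set ℝ} {R : ℝ} (hst : s ⊆ t) (ht : t ⊆ Icc 1 R) :
    ∫ x in s, 1 / x ≤ ∫ x in t, 1 / x := by
  have hint : IntegrableOn (fun x : ℝ => 1 / x) (Icc 1 R) :=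
    (continuousOn_const.div continuousOn_id fun _ hx => (zero_lt_one.trans_le hx.1).ne')
      |>.integrableOn_Icc
  refine setIntegral_mono_set (hint.mono_set ht) ?_ hst.eventuallyLE
  exact ae_restrict_of_ae_restrict_of_subset ht <| (ae_restrict_iff' measurableSet_Icc).2 <|
    .of_forall fun x hx => one_div_nonneg.2 (zero_le_one.trans hx.1)

theorem eventually_logDensity_ratio_mem_Icc (E : Set ℝ) :
    ∀ᶠ R in atTop, (∫ t in E ∩ Icc 1 R, 1 / t) / log R ∈ Icc (0 : ℝ) 1 := by
  filter_upwards [eventually_ge_atTop 1] with R hR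
  have hle : ∫ t in E ∩ Icc 1 R, 1 / t ≤ log R := by
    calc ∫ t in E ∩ Icc 1 R, 1 / t ≤ ∫ t in Icc 1 R, 1 / t :=
          setIntegral_one_div_mono inter_subset_right subset_rfl
      _ = log R := by rw [integral_Icc_one_div one_pos hR, log_one, sub_zero]
  have hnonneg : 0 ≤ ∫ t in E ∩ Icc 1 R, 1 / t := by
    simpa using setIntegral_one_div_mono (empty_subset _) (inter_subset_right (s := E))
  exact ⟨div_nonneg hnonneg (log_nonneg hR), div_le_one_of_le₀ hle (log_nonneg hR)⟩

theorem one_sub_inv_le_logDensity_ratio {E : Set ℝ} {r K : ℝ} (hr : 1 < r) (hK : 1 ≤ K)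
    (hE : Icc r (r ^ K) ⊆ E) :
    1 - K⁻¹ ≤ (∫ t in E ∩ Icc 1 (r ^ K), 1 / t) / log (r ^ K) := by
  have hlog : log (r ^ K) = K * log r := log_rpow (by linarith) K
  have hrR : r ≤ r ^ K := by simpa using rpow_le_rpow_of_exponent_le hr.le hK
  have hsub : Icc r (r ^ K) ⊆ E ∩ Icc 1 (r ^ K) :=
    fun t ht => ⟨hE ht, hr.le.trans ht.1, ht.2⟩
  have hlow := setIntegral_one_div_mono hsub inter_subset_right
  rw [integral_Icc_one_div (by linarith) hrR, hlog] at hlow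
  rw [hlog, le_div_iff₀ (by have := log_pos hr; positivity)]
  calc (1 - K⁻¹) * (K * log r) = K * log r - log r := by field_simp
    _ ≤ _ := hlow

theorem upLogDens_eq_one_of_frequently_Icc_rpow_subset {E : Set ℝ}
    (h : ∀ K : ℝ, 1 < K → ∃ᶠ r in atTop, Icc r (r ^ K) ⊆ E) : upLogDens E = 1 := by
  have hbounds := eventually_logDensity_ratio_mem_Icc E
  refine le_antisymm (limsup_le_of_le (isCoboundedUnder_le_of_eventually_le _
    (hbounds.mono fun _ h => h.1)) (hbounds.mono fun _ h => h.2)) ?_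
  have hlim : Tendsto (fun K : ℝ => 1 - K⁻¹) atTop (𝓝 1) := by
    simpa using tendsto_const_nhds.sub tendsto_inv_atTop_zero (a := (1 : ℝ))
  refine le_of_tendsto hlim ?_
  filter_upwards [eventually_gt_atTop 1] with K hK
  refine le_limsup_of_frequently_le ?_
    (isBoundedUnder_of_eventually_le (hbounds.mono fun _ h => h.2))
  exact (tendsto_rpow_atTop (by linarith)).frequently_map _
    (fun r hr => one_sub_inv_le_logDensity_ratio hr.2 hK.le hr.1)
    ((h K hK).and_eventually (eventually_gt_atTop 1))

end LogDensity

section Growth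

theorem eventually_add_mul_rpow_le_rpow (c C : ℝ) {α β : ℝ} (hα : 0 ≤ α) (hαβ : α < β) :
    ∀ᶠ x in atTop, c + C * x ^ α ≤ x ^ β := by
  filter_upwards [eventually_ge_atTop 1,
    (tendsto_rpow_atTop (sub_pos.2 hαβ)).eventually_ge_atTop (|c| + |C|)] with x hx1 hx
  have h1 : 1 ≤ x ^ α := one_le_rpow hx1 hα
  calc c + C * x ^ α ≤ |c| * x ^ α + |C| * x ^ α := by
        gcongr
        · exact (le_abs_self c).trans (le_mul_of_one_le_right (abs_nonneg c) h1)
        · exact le_abs_self C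
    _ = (|c| + |C|) * x ^ α := by ring
    _ ≤ x ^ (β - α) * x ^ α := by gcongr
    _ = x ^ β := by rw [← rpow_add (by linarith), sub_add_cancel]

variable {A : ℝ → ℝ} {a : ℝ}

theorem integral_div_le_add_mul_log (ha : 1 ≤ a) (hA : MonotoneOn A (Ici a)) {r : ℝ}
    (har : a ≤ r) (hAr : 0 ≤ A r) :
    ∫ t in (0 : ℝ)..r, A t / t ≤ (∫ t in (0 : ℝ)..a, A t / t) + A r * log r := by
  have ha0 : 0 < a := zero_lt_one.trans_le ha
  have hr0 : 0 < r := ha0.trans_le har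
  by_cases h0a : IntervalIntegrable (fun t => A t / t) volume 0 a
  · have hAar : MonotoneOn A (uIcc a r) :=
      hA.mono (by rw [uIcc_of_le har]; exact Icc_subset_Ici_self)
    have hinv : ContinuousOn (fun t : ℝ => t⁻¹) (uIcc a r) := continuousOn_inv₀.mono fun t ht =>
      (ha0.trans_le (by rw [uIcc_of_le har] at ht; exact ht.1)).ne'
    have har' : IntervalIntegrable (fun t => A t / t) volume a r := by
      simpa only [div_eq_mul_inv] using hAar.intervalIntegrable.mul_continuousOn hinv
    rw [← intervalIntegral.integral_add_adjacent_intervals h0a har', add_le_add_iff_left]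
    calc ∫ t in a..r, A t / t ≤ ∫ t in a..r, A r * t⁻¹ := by
          refine intervalIntegral.integral_mono_on har har'
            (hinv.intervalIntegrable.const_mul _) fun t ht => ?_
          rw [← div_eq_mul_inv]
          exact div_le_div_of_nonneg_right (hA ht.1 har ht.2) (ha0.trans_le ht.1).le
      _ = A r * log (r / a) := by
          rw [intervalIntegral.integral_const_mul, integral_inv_of_pos ha0 hr0]
      _ ≤ A r * log r := by gcongr; exact div_le_self hr0.le ha
  · have h0r : ¬ IntervalIntegrable (fun t => A t / t) volume 0 r :=
      fun h => h0a <| h.mono_set <| by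
        rw [uIcc_of_le ha0.le, uIcc_of_le hr0.le]; exact Icc_subset_Icc_right har
    rw [intervalIntegral.integral_undef h0a, intervalIntegral.integral_undef h0r, zero_add]
    exact mul_nonneg hAr (log_nonneg (ha.trans har))

theorem frequently_Icc_rpow_subset_of_frequently_rpow_log_lt (hA0 : 0 ≤ A) (ha : 1 ≤ a)
    (hA : MonotoneOn A (Ici a)) {α β K : ℝ} (hα : 1 ≤ α) (hαβ : α < β) (hK : 0 ≤ K)
    (hT : ∃ᶠ r in atTop, log r ^ β < ∫ t in (0 : ℝ)..r, A t / t) :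
    ∃ᶠ r in atTop, Icc r (r ^ K) ⊆ {t | 1 ≤ t ∧ log t ^ (α - 1) ≤ A t} := by
  have hpoly := eventually_add_mul_rpow_le_rpow (∫ t in (0 : ℝ)..a, A t / t) (K ^ (α - 1))
    (by linarith) hαβ
  refine (hT.and_eventually ((eventually_ge_atTop a).and
    ((tendsto_log_atTop.eventually hpoly).and (tendsto_log_atTop.eventually_gt_atTop 0)))).mono ?_
  rintro r ⟨hTr, har, hgrowth, hlog⟩
  have hAr : (K * log r) ^ (α - 1) ≤ A r := by
    have hpow : log r ^ α = log r ^ (α - 1) * log r := by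
      rw [← rpow_add_one hlog.ne', sub_add_cancel]
    have := integral_div_le_add_mul_log ha hA har (hA0 r)
    rw [mul_rpow hK hlog.le]
    refine le_of_mul_le_mul_right ?_ hlog
    rw [mul_assoc, ← hpow]
    linarith
  intro t ht
  have ht1 : 1 ≤ t := (ha.trans har).trans ht.1
  have hlogt : log t ≤ K * log r := by
    rw [← log_rpow (by linarith)]
    exact log_le_log (by linarith) ht.2
  refine ⟨ht1, ?_⟩
  calc log t ^ (α - 1) ≤ (K * log r) ^ (α - 1) :=
        rpow_le_rpow (log_nonneg ht1) hlogt (by linarith)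
    _ ≤ A r := hAr
    _ ≤ A t := hA har (har.trans ht.1) ht.1

end Growth

theorem exists_frequently_rpow_log_lt {g : ℝ → ℝ} {α : ℝ} (hα : 0 ≤ α)
    (hg : ∀ᶠ r in atTop, 0 ≤ g r)
    (h : (α : EReal) < limsup (fun r => ((log (g r) / log (log r) : ℝ) : EReal)) atTop) :
    ∃ β > α, ∃ᶠ r in atTop, log r ^ β < g r := by
  obtain ⟨β, hαβ, hβ⟩ := exists_between h
  lift β to ℝ using ⟨(hβ.trans_le le_top).ne, ne_bot_of_gt hαβ⟩
  have hαβ : α < β := by exact_mod_cast hαβ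
  have hfreq : ∃ᶠ r in atTop, β < log (g r) / log (log r) := by
    by_contra hcon
    refine hβ.not_ge (limsup_le_of_le (by isBoundedDefault) ?_)
    exact (not_frequently.1 hcon).mono fun r hr => by exact_mod_cast not_lt.1 hr
  refine ⟨β, hαβ, (hfreq.and_eventually (hg.and
    (tendsto_log_atTop.eventually_gt_atTop 1))).mono ?_⟩
  rintro r ⟨hr, hgr, hlog⟩
  have hlr : 0 < log r := one_pos.trans hlog
  have hβr : β * log (log r) < log (g r) := (lt_div_iff₀ (log_pos hlog)).1 hr
  have hgpos : 0 < g r := by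
    refine hgr.lt_of_ne fun h0 => ?_
    rw [← h0, log_zero] at hβr
    nlinarith [log_pos hlog]
  rwa [← log_lt_log_iff (rpow_pos_of_pos hlr β) hgpos, log_rpow hlr]

section SphericalArea

theorem eventually_monotoneOn_setIntegral_ball {X : Type*} [PseudoMetricSpace X]
    [MeasurableSpace X] (μ : Measure X) (x : X) {g : X → ℝ} (hg : 0 ≤ g) :
    ∀ᶠ a in atTop, MonotoneOn (fun r => ∫ z in ball x r, g z ∂μ) (Ici a) := by
  by_cases hint : ∀ r, IntegrableOn g (ball x r) μ
  · exact .of_forall fun _ _ _ t _ hst =>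
      setIntegral_mono_set (hint t) (.of_forall hg) (ball_subset_ball hst).eventuallyLE
  · obtain ⟨r₀, hr₀⟩ := not_forall.1 hint
    -- beyond `r₀` the integral takes the junk value `0`
    have hzero : ∀ r ≥ r₀, ∫ z in ball x r, g z ∂μ = 0 := fun r hr =>
      integral_undef fun h => hr₀ (IntegrableOn.mono_set h (ball_subset_ball hr))
    filter_upwards [eventually_ge_atTop r₀] with a ha s hs t ht _
    simp only [hzero s (ha.trans hs), hzero t (ha.trans ht), le_rfl]

theorem sphArea_nonneg (f : ℂ → ℂ) (r : ℝ) : 0 ≤ sphArea f r :=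
  mul_nonneg (by positivity) (setIntegral_nonneg measurableSet_ball fun _ _ => sq_nonneg _)

theorem eventually_monotoneOn_sphArea (f : ℂ → ℂ) :
    ∀ᶠ a in atTop, MonotoneOn (sphArea f) (Ici a) :=
  (eventually_monotoneOn_setIntegral_ball volume 0 fun z => sq_nonneg (sphDeriv f z)).mono
    fun _ ha _ hs _ ht hst => mul_le_mul_of_nonneg_left (ha hs ht hst) (by positivity)

theorem nevT_nonneg (f : ℂ → ℂ) {r : ℝ} (hr : 0 ≤ r) : 0 ≤ nevT f r :=
  intervalIntegral.integral_nonneg hr fun t ht => div_nonneg (sphArea_nonneg f t) ht.1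

end SphericalArea

theorem sphArea_logdensity_one_general
    (f : ℂ → ℂ) (α : ℝ) (hα : 2 < α)
    (h : (α : EReal) < fnLogOrder f) :
    upLogDens {r : ℝ | 1 ≤ r ∧ Real.log r ^ (α - 1) ≤ sphArea f r} = 1 := by
  obtain ⟨a, hmono, ha⟩ :=
    ((eventually_monotoneOn_sphArea f).and (eventually_ge_atTop 1)).exists
  obtain ⟨β, hαβ, hT⟩ := exists_frequently_rpow_log_lt (by linarith)
    ((eventually_ge_atTop 0).mono fun r => nevT_nonneg f) h
  exact upLogDens_eq_one_of_frequently_Icc_rpow_subset fun K hK =>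
    frequently_Icc_rpow_subset_of_frequently_rpow_log_lt (sphArea_nonneg f) ha hmono
      (by linarith) hαβ (by linarith) hT

/-- Lemma 3.1(b): for transcendental meromorphic `f` with `ρ_log(f) > α > 2`,
the set `H₂ = {r ≥ 1 : A(r,f) ≥ log^{α−1} r}` has upper logarithmic density `1`. -/
theorem sphArea_logdensity_one
    (f : ℂ → ℂ) (hf : TranscMero f) (α : ℝ) (hα : 2 < α)
    (h : (α : EReal) < fnLogOrder f) :
    upLogDens {r : ℝ | 1 ≤ r ∧ Real.log r ^ (α - 1) ≤ sphArea f r} = 1 :=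
  sphArea_logdensity_one_general f α hα h
end

section
/- Let φ, ψ : [r₀,∞) → [e,∞) be functions with ψ(r) → ∞ as r → ∞, and let ε > 0. If limsup_{r→∞} φ(r) · log^{1+ε} ψ(r) / ψ(r) < ∞, then φ(r) · log^m φ(r) = o(ψ(r)) as r → ∞, where m = 1 + ε/2. -/
open MeasureTheory Filter Metric

/-! Eventually `φ ≤ C ψ`, so `log φ = O(log ψ)`; writing `L = log ψ`, this gives
`φ log^{1+ε/2} φ = O(φ L^{1+ε} · L^{-ε/2})`, and the hypothesis makes this `O(ψ) · o(1)`. -/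

open Asymptotics Real

section

variable {α : Type*} {l : Filter α} {f g : α → ℝ}

theorem Asymptotics.isBigO_of_eventually_div_le {C : ℝ} (hf : ∀ᶠ x in l, 0 ≤ f x)
    (hg : ∀ᶠ x in l, 0 < g x) (h : ∀ᶠ x in l, f x / g x ≤ C) : f =O[l] g :=
  IsBigO.of_bound C <| by
    filter_upwards [hf, hg, h] with x hfx hgx hx
    rw [norm_of_nonneg hfx, norm_of_nonneg hgx.le]
    exact (div_le_iff₀ hgx).1 hx

/-- The constant of `f =O g` becomes an additive `log c`, which `log ∘ g → ∞` absorbs. -/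
theorem Asymptotics.IsBigO.log_of_one_le (hfg : f =O[l] g) (hf : ∀ᶠ x in l, 1 ≤ f x)
    (hg : Tendsto g l atTop) : (fun x => log (f x)) =O[l] fun x => log (g x) := by
  obtain ⟨c, hc, hcfg⟩ := hfg.exists_pos
  calc (fun x => log (f x)) =O[l] fun x => log (c * g x) := by
        refine IsBigO.of_bound' ?_
        filter_upwards [hf, hcfg.bound, hg.eventually_gt_atTop 0] with x hfx hfgx hgx
        have hlog : log (f x) ≤ log (c * g x) := by
          rw [norm_of_nonneg (by linarith), norm_of_nonneg hgx.le] at hfgx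
          exact log_le_log (by linarith) hfgx
        have hlog_nonneg : 0 ≤ log (f x) := log_nonneg hfx
        rw [norm_of_nonneg hlog_nonneg, norm_of_nonneg (hlog_nonneg.trans hlog)]
        exact hlog
    _ =O[l] fun x => log (g x) := (isBigO_log_const_mul_log_atTop c).comp_tendsto hg

end

theorem little_o_from_limsup_bound_general
    (r₀ : ℝ) (φ ψ : ℝ → ℝ)
    (hφ : ∀ r, r₀ ≤ r → Real.exp 1 ≤ φ r)
    (hψ' : Filter.Tendsto ψ Filter.atTop Filter.atTop)
    (ε : ℝ) (hε : 0 < ε)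
    (h : ∃ C : ℝ, ∀ᶠ r in Filter.atTop, φ r * Real.log (ψ r) ^ (1 + ε) / ψ r ≤ C) :
    (fun r => φ r * Real.log (φ r) ^ (1 + ε / 2)) =o[Filter.atTop] ψ := by
  obtain ⟨C, hC⟩ := h
  have hL : Tendsto (fun r => log (ψ r)) atTop atTop := tendsto_log_atTop.comp hψ'
  have hL1 : ∀ᶠ r in atTop, 1 ≤ log (ψ r) := hL.eventually_ge_atTop 1
  have hφ1 : ∀ᶠ r in atTop, 1 ≤ φ r := (eventually_ge_atTop r₀).mono fun r hr => by
    linarith [hφ r hr, add_one_le_exp (1 : ℝ)]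
  have hφLψ : (fun r => φ r * log (ψ r) ^ (1 + ε)) =O[atTop] ψ :=
    isBigO_of_eventually_div_le (by filter_upwards [hφ1, hL1] with r _ _ using by positivity)
      (hψ'.eventually_gt_atTop 0) hC
  have hφψ : φ =O[atTop] ψ := by
    refine (IsBigO.of_bound' ?_).trans hφLψ
    filter_upwards [hφ1, hL1] with r hφr hLr
    rw [norm_of_nonneg (by linarith), norm_of_nonneg (by positivity)]
    exact le_mul_of_one_le_right (by linarith) (one_le_rpow hLr (by linarith))
  calc (fun r => φ r * log (φ r) ^ (1 + ε / 2))
      =O[atTop] fun r => φ r * log (ψ r) ^ (1 + ε / 2) :=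
        (isBigO_refl φ _).mul ((hφψ.log_of_one_le hφ1 hψ').rpow (by positivity)
          (hL1.mono fun _ hr => zero_le_one.trans hr))
    _ =ᶠ[atTop] fun r => φ r * log (ψ r) ^ (1 + ε) * log (ψ r) ^ (-(ε / 2)) := by
        filter_upwards [hL1] with r hr
        rw [mul_assoc, ← rpow_add (by linarith)]
        ring_nf
    _ =o[atTop] fun r => ψ r * 1 :=
        hφLψ.mul_isLittleO <|
          (isLittleO_one_iff ℝ).2 ((tendsto_rpow_neg_atTop (by positivity)).comp hL)
    _ = ψ := by simp only [mul_one]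

/-- Remark 2.2, real-analysis step: if `φ, ψ ≥ e` on `[r₀,∞)`, `ψ → ∞`, and
`limsup φ(r)·log^{1+ε}ψ(r)/ψ(r) < ∞`, then `φ(r)·logᵐφ(r) = o(ψ(r))` with `m = 1 + ε/2`. -/
theorem little_o_from_limsup_bound
    (r₀ : ℝ) (φ ψ : ℝ → ℝ)
    (hφ : ∀ r, r₀ ≤ r → Real.exp 1 ≤ φ r)
    (hψ : ∀ r, r₀ ≤ r → Real.exp 1 ≤ ψ r)
    (hψ' : Filter.Tendsto ψ Filter.atTop Filter.atTop)
    (ε : ℝ) (hε : 0 < ε)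
    (h : ∃ C : ℝ, ∀ᶠ r in Filter.atTop, φ r * Real.log (ψ r) ^ (1 + ε) / ψ r ≤ C) :
    (fun r => φ r * Real.log (φ r) ^ (1 + ε / 2)) =o[Filter.atTop] ψ :=
  little_o_from_limsup_bound_general r₀ φ ψ hφ hψ' ε hε h
end
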